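/- The system of six equations (R^3_1), (R^3_2), (R^1_2), (R^1_3), (R^2_3), (R^2_1) — where (R^3_1) reads s_□(q^{λ2^t+ρ})·T_{λ1,λ2,λ3} = ∑_{α1∈λ1−□} T_{α1,λ2,λ3} − ∑_{γ3∈λ3+□} q^{(κ(γ3)−κ(λ3))/2}·T_{λ1,λ2,γ3}, (R^3_2) reads s_□(q^{λ1+ρ})·T_{λ1,λ2,λ3} = ∑_{β2∈λ2−□} q^{(κ(β2)−κ(λ2))/2}·T_{λ1,β2,λ3} − ∑_{γ3∈λ3+□} T_{λ1,λ2,γ3}, and the remaining four are obtained from these two by applying the cyclic permutation of indices λ1→λ2→λ3→λ1 once and twice — has at most one solution (T_{λ1,λ2,λ3}) in ℚ(q^{1/2}) with T_{∅,∅,∅} = 1: any two families of elements of ℚ(q^{1/2}) indexed by triples of partitions that satisfy all six equations and take the value 1 at (∅,∅,∅) coincide. -/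

import Mathlib

open scoped BigOperators

noncomputable section

/-- The field `ℚ(q^{1/2})` of rational functions in `q^{1/2}`. -/
abbrev K : Type := RatFunc ℚ

/-- The formal variable `q^{1/2}`. -/
def t : K := RatFunc.X

/-- `q = (q^{1/2})^2`. -/
def qq : K := t ^ 2

/-- `κ(λ) = 2 ∑_{(i,j) ∈ λ} (j - i)`. -/
def kappa (lam : YoungDiagram) : ℤ :=
  2 * ∑ c ∈ lam.cells, ((c.2 : ℤ) - (c.1 : ℤ))

/-- `AddBox lam mu` says that `mu` is obtained from `lam` by adding a single box,
i.e. `mu ∈ lam + □`, equivalently `lam ∈ mu − □`. -/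
def AddBox (lam mu : YoungDiagram) : Prop :=
  lam.cells ⊆ mu.cells ∧ mu.card = lam.card + 1

/-- The specialization of the power sum `p_r` at the variables
`x_i = (q^{1/2})^{s(2 λ_i − 2 i + 1)}` (1-based `i ≥ 1`), i.e. at `q^{λ+ρ}` when `s = 1`
and at `q^{−ρ−λ}` when `s = −1`; in both cases a rational function in `q^{1/2}`. -/
def pSpec (s : ℤ) (lam : YoungDiagram) (r : ℕ) : K :=
  (∑ i ∈ Finset.range lam.card,
    (t ^ (s * (2 * (lam.rowLen i : ℤ) - 2 * (i : ℤ) - 1) * (r : ℤ)) -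
      t ^ (s * (-2 * (i : ℤ) - 1) * (r : ℤ))))
  + (s : K) / (t ^ (r : ℤ) - t ^ (-(r : ℤ)))

/-- `z_τ = ∏_k k^{m_k} m_k!` for a multiset `τ` of parts. -/
def zPart (m : Multiset ℕ) : ℕ :=
  m.prod * (m.dedup.map fun k => (m.count k).factorial).prod

/-- Specialization of the complete homogeneous symmetric function `h_n`, via the Newton
formula `h_n = ∑_{τ ⊢ n} p_τ / z_τ`. -/
def hSpec (s : ℤ) (lam : YoungDiagram) (n : ℕ) : K :=
  ∑ τ : Nat.Partition n, (τ.parts.map (pSpec s lam)).prod / (zPart τ.parts : K)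

/-- `h_n` specialization, extended by `0` to negative indices. -/
def hSpecZ (s : ℤ) (lam : YoungDiagram) (n : ℤ) : K :=
  if 0 ≤ n then hSpec s lam n.toNat else 0

/-- The specialization `s_{μ/ν}(q^{λ+ρ})` (for `s = 1`), resp. `s_{μ/ν}(q^{−ρ−λ})`
(for `s = −1`), of the skew Schur function, through the Jacobi–Trudi determinant;
it vanishes unless `ν ⊆ μ`. -/
def skewSchur (s : ℤ) (lam mu nu : YoungDiagram) : K :=
  Matrix.det fun i j : Fin (mu.card + nu.card) =>
    hSpecZ s lam ((mu.rowLen i : ℤ) - (nu.rowLen j : ℤ) - (i.1 : ℤ) + (j.1 : ℤ))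

/-- The one-box partition `□ = (1)` as a Young diagram. -/
def box : YoungDiagram := YoungDiagram.ofRowLens [1] (List.sortedGE_iff_pairwise.mpr (List.pairwise_singleton _ 1))

/-- `s_□(q^{λ+ρ})`. -/
def sBox (lam : YoungDiagram) : K := skewSchur 1 lam box ⊥

/-- The topological vertex
`C_{λ1,λ2,λ3}(q) = q^{κ(λ2)/2+κ(λ3)/2} s_{λ2^t}(q^ρ) ∑_η s_{λ3^t/η}(q^{λ2+ρ}) s_{λ1/η}(q^{λ2^t+ρ})`. -/
def vertexC (l1 l2 l3 : YoungDiagram) : K :=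
  t ^ (kappa l2 + kappa l3) * skewSchur 1 ⊥ l2.transpose ⊥ *
    ∑ᶠ eta : YoungDiagram,
      skewSchur 1 l2 l3.transpose eta * skewSchur 1 l2.transpose l1 eta

/-- `T_{λ1,λ2,λ3} = (−1)^{|λ1|+|λ2|+|λ3|} C_{λ1^t,λ2^t,λ3^t}`. -/
def vertexT (l1 l2 l3 : YoungDiagram) : K :=
  (-1 : K) ^ (l1.card + l2.card + l3.card) *
    vertexC l1.transpose l2.transpose l3.transpose

/-- Equation `(R^3_1)`:
`s_□(q^{λ2^t+ρ}) T_{λ1,λ2,λ3} = ∑_{α1∈λ1−□} T_{α1,λ2,λ3} − ∑_{γ3∈λ3+□} q^{(κ(γ3)−κ(λ3))/2} T_{λ1,λ2,γ3}`. -/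
def EqR31 (T : YoungDiagram → YoungDiagram → YoungDiagram → K) : Prop :=
  ∀ l1 l2 l3 : YoungDiagram,
    sBox l2.transpose * T l1 l2 l3 =
      (∑ᶠ (a : YoungDiagram) (_ : AddBox a l1), T a l2 l3) -
        ∑ᶠ (g : YoungDiagram) (_ : AddBox l3 g), t ^ (kappa g - kappa l3) * T l1 l2 g

/-- Equation `(R^3_2)`:
`s_□(q^{λ1+ρ}) T_{λ1,λ2,λ3} = ∑_{β2∈λ2−□} q^{(κ(β2)−κ(λ2))/2} T_{λ1,β2,λ3} − ∑_{γ3∈λ3+□} T_{λ1,λ2,γ3}`. -/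
def EqR32 (T : YoungDiagram → YoungDiagram → YoungDiagram → K) : Prop :=
  ∀ l1 l2 l3 : YoungDiagram,
    sBox l1 * T l1 l2 l3 =
      (∑ᶠ (b : YoungDiagram) (_ : AddBox b l2), t ^ (kappa b - kappa l2) * T l1 b l3) -
        ∑ᶠ (g : YoungDiagram) (_ : AddBox l3 g), T l1 l2 g

/-- The system of the six equations `(R^3_1)`, `(R^3_2)` together with their images under
the cyclic permutation of indices `λ1 → λ2 → λ3 → λ1` applied once and twice
(i.e. `(R^1_2)`, `(R^1_3)`, `(R^2_3)`, `(R^2_1)`). -/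
def SatisfiesSystem (T : YoungDiagram → YoungDiagram → YoungDiagram → K) : Prop :=
  EqR31 T ∧ EqR32 T ∧
    EqR31 (fun a b c => T c a b) ∧ EqR32 (fun a b c => T c a b) ∧
      EqR31 (fun a b c => T b c a) ∧ EqR32 (fun a b c => T b c a)

/-!
The difference `D` of two solutions solves the same (homogeneous, linear) system and vanishes at
`(∅, ∅, ∅)`; we show `D = 0` by induction on `|λ1| + |λ2| + |λ3|`. If, say, `λ3 ≠ ∅`, then for
every `μ` with `|μ| = |λ3| - 1` the equations `(R^3_2)` and `(R^3_1)` at `(λ1, λ2, μ)` reduce,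
modulo smaller terms, to `∑_{γ ∈ μ+□} D_{λ1,λ2,γ} = 0` and
`∑_{γ ∈ μ+□} q^{(κ(γ)-κ(μ))/2} D_{λ1,λ2,γ} = 0`.
These force `D_{λ1,λ2,γ} = 0` by downward induction on `κ(γ)`: write `γ = μ + b` with `b` the
last box of the last row of `γ`. Every other `γ' ∈ μ+□` either has larger `κ` or is the diagram
obtained from `μ` by opening a new row, which has a weight different from that of `γ`, so the two
equations determine `D_{λ1,λ2,γ}`. The other two slots follow by cyclic symmetry.
-/

theorem eq_zero_of_sum_eq_zero_of_sum_mul_eq_zero {ι R : Type*} [CommRing R] [NoZeroDivisors R]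
    {s : Finset ι} {f w : ι → R} {a : ι} {v : R} (ha : a ∈ s) (hv : w a ≠ v)
    (hs : ∀ x ∈ s, x ≠ a → w x = v ∨ f x = 0)
    (h0 : ∑ x ∈ s, f x = 0) (h1 : ∑ x ∈ s, w x * f x = 0) : f a = 0 := by
  have hsingle : ∑ x ∈ s, (w x - v) * f x = (w a - v) * f a :=
    Finset.sum_eq_single_of_mem a ha fun x hx hxa => by
      rcases hs x hx hxa with h | h <;> simp [h]
  have hzero : ∑ x ∈ s, (w x - v) * f x = 0 := by
    simp only [sub_mul, Finset.sum_sub_distrib, ← Finset.mul_sum, h0, h1, mul_zero, sub_zero]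
  exact (mul_eq_zero.mp (hsingle ▸ hzero)).resolve_left (sub_ne_zero.mpr hv)

theorem t_zpow_injective : Function.Injective fun n : ℤ => t ^ n := fun m n h => by
  classical
  simpa [t] using congrArg (RatFunc.inftyValuation ℚ) h

namespace YoungDiagram

theorem fst_lt_card {γ : YoungDiagram} {c : ℕ × ℕ} (hc : c ∈ γ) : c.1 < γ.card :=
  (mem_iff_lt_colLen.mp hc).trans_le <| by
    rw [colLen_eq_card]; exact Finset.card_le_card (Finset.filter_subset _ _)

theorem snd_lt_card {γ : YoungDiagram} {c : ℕ × ℕ} (hc : c ∈ γ) : c.2 < γ.card :=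
  (mem_iff_lt_rowLen.mp hc).trans_le <| by
    rw [rowLen_eq_card]; exact Finset.card_le_card (Finset.filter_subset _ _)

theorem finite_setOf_card_le (n : ℕ) : {γ : YoungDiagram | γ.card ≤ n}.Finite := by
  refine ((Finset.range n ×ˢ Finset.range n).powerset.finite_toSet.preimage
    fun γ _ δ _ h => YoungDiagram.ext h).subset fun γ hγ => ?_
  rw [Set.mem_preimage, Finset.mem_coe, Finset.mem_powerset]
  intro c hc
  have := fst_lt_card hc
  have := snd_lt_card hc
  have : γ.card ≤ n := hγ
  simp only [Finset.mem_product, Finset.mem_range]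
  omega

theorem mem_of_lt_of_cells_eq_insert {μ γ : YoungDiagram} {b y : ℕ × ℕ}
    (hγ : γ.cells = insert b μ.cells) (hy : y < b) : y ∈ μ := by
  have hyγ : y ∈ γ.cells := γ.isLowerSet hy.le (by simp [hγ])
  rw [hγ, Finset.mem_insert] at hyγ
  exact hyγ.resolve_left hy.ne

-- `(b.1 + 1, 0) ∉ γ` says that `b` lies in the last row of `γ`.
theorem exists_cells_eq_insert_of_nonempty {γ : YoungDiagram} (hγ : γ.cells.Nonempty) :
    ∃ (μ : YoungDiagram) (b : ℕ × ℕ), b ∉ μ ∧ γ.cells = insert b μ.cells ∧ (b.1 + 1, 0) ∉ γ := by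
  obtain ⟨b, hb, hmax⟩ := Finset.exists_max_image γ.cells toLex hγ
  have hlex : ∀ y ∈ γ, y.1 < b.1 ∨ y.1 = b.1 ∧ y.2 ≤ b.2 := fun y hy =>
    Prod.Lex.toLex_le_toLex.mp (hmax y hy)
  refine ⟨⟨γ.cells.erase b, ?_⟩, b, Finset.notMem_erase b γ.cells,
    (Finset.insert_erase hb).symm, fun h => by have := hlex _ h; omega⟩
  intro x y hyx hx
  rw [Finset.mem_coe, Finset.mem_erase] at hx ⊢
  refine ⟨?_, γ.isLowerSet hyx hx.2⟩
  rintro rfl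
  have := hlex x hx.2
  exact hx.1 (Prod.ext (by have := hyx.1; omega) (by have := hyx.1; have := hyx.2; omega))

end YoungDiagram

open YoungDiagram

def content (c : ℕ × ℕ) : ℤ := c.2 - c.1

theorem kappa_of_cells_eq_insert {μ γ : YoungDiagram} {b : ℕ × ℕ} (hb : b ∉ μ)
    (hγ : γ.cells = insert b μ.cells) : kappa γ = kappa μ + 2 * content b := by
  unfold kappa content
  rw [hγ, Finset.sum_insert hb]
  ring

theorem kappa_le (γ : YoungDiagram) : kappa γ ≤ 2 * (γ.card : ℤ) ^ 2 := by
  have h : ∑ c ∈ γ.cells, ((c.2 : ℤ) - c.1) ≤ ∑ _c ∈ γ.cells, (γ.card : ℤ) :=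
    Finset.sum_le_sum fun c hc => by have := snd_lt_card hc; omega
  rw [Finset.sum_const, nsmul_eq_mul] at h
  unfold kappa
  nlinarith

theorem kappa_strongDownwardInduction {n : ℕ} {P : YoungDiagram → Prop}
    (step : ∀ γ, γ.card = n → (∀ g, g.card = n → kappa γ < kappa g → P g) → P γ)
    (γ : YoungDiagram) (hγ : γ.card = n) : P γ := by
  induction hk : (2 * (n : ℤ) ^ 2 - kappa γ).toNat using Nat.strong_induction_on
    generalizing γ with
  | _ k ih =>
    refine step γ hγ fun g hg hlt => ih _ ?_ g hg rfl
    have := kappa_le g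
    rw [hg] at this
    omega

theorem addBox_iff {μ γ : YoungDiagram} :
    AddBox μ γ ↔ ∃ b ∉ μ, γ.cells = insert b μ.cells := by
  constructor
  · rintro ⟨hsub, hcard : γ.cells.card = μ.cells.card + 1⟩
    obtain ⟨b, hb⟩ : ∃ b, γ.cells \ μ.cells = {b} := Finset.card_eq_one.mp <| by
      rw [Finset.card_sdiff_of_subset hsub]; omega
    refine ⟨b, fun h => ?_, ?_⟩
    · simpa [h] using hb.symm.subset (Finset.mem_singleton_self b)
    · rw [Finset.insert_eq, ← hb, Finset.sdiff_union_of_subset hsub]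
  · rintro ⟨b, hb, hγ⟩
    refine ⟨hγ ▸ Finset.subset_insert b μ.cells, ?_⟩
    rw [YoungDiagram.card, hγ, Finset.card_insert_of_notMem hb]

theorem finite_setOf_addBox_left (γ : YoungDiagram) : {μ | AddBox μ γ}.Finite :=
  (finite_setOf_card_le γ.card).subset fun μ hμ =>
    show μ.card ≤ γ.card by have := hμ.2; omega

theorem finite_setOf_addBox_right (μ : YoungDiagram) : {γ | AddBox μ γ}.Finite :=
  (finite_setOf_card_le (μ.card + 1)).subset fun _ hγ => hγ.2.le

theorem eq_or_eq_of_content_le {μ γ g : YoungDiagram} {b c : ℕ × ℕ}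
    (hγ : γ.cells = insert b μ.cells) (hlast : (b.1 + 1, 0) ∉ γ)
    (hc : c ∉ μ) (hg : g.cells = insert c μ.cells) (hcb : content c ≤ content b) :
    c = b ∨ c = (b.1 + 1, 0) := by
  unfold content at hcb
  by_cases hrow : c.1 ≤ b.1
  · left
    refine (lt_or_eq_of_le (Prod.mk_le_mk.mpr ⟨hrow, by omega⟩ : c ≤ b)).resolve_left fun hlt => ?_
    exact hc (mem_of_lt_of_cells_eq_insert hγ hlt)
  · right
    by_contra hne
    have hlt : (b.1 + 1, 0) < c := lt_of_le_of_ne (Prod.mk_le_mk.mpr ⟨by omega, Nat.zero_le _⟩)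
      (Ne.symm hne)
    refine hlast ((mem_cells _).mp ?_)
    rw [hγ]
    exact Finset.mem_insert_of_mem (mem_of_lt_of_cells_eq_insert hg hlt)

theorem eq_zero_of_sum_addBox_eq_zero {f : YoungDiagram → K} {n : ℕ}
    (h0 : ∀ μ : YoungDiagram, μ.card = n → ∑ᶠ (g : YoungDiagram) (_ : AddBox μ g), f g = 0)
    (h1 : ∀ μ : YoungDiagram, μ.card = n →
      ∑ᶠ (g : YoungDiagram) (_ : AddBox μ g), t ^ (kappa g - kappa μ) * f g = 0)
    (γ : YoungDiagram) (hγ : γ.card = n + 1) : f γ = 0 := by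
  refine kappa_strongDownwardInduction (P := fun γ => f γ = 0) (fun γ hγ ih => ?_) γ hγ
  obtain ⟨μ, b, hb, hγμ, hlast⟩ :=
    exists_cells_eq_insert_of_nonempty (Finset.card_pos.mp (by omega : 0 < γ.card))
  have hγ_add : AddBox μ γ := addBox_iff.mpr ⟨b, hb, hγμ⟩
  have hμ : μ.card = n := by have := hγ_add.2; omega
  have hfin := finite_setOf_addBox_right μ
  -- `v` is the weight of the extension of `μ` that opens a new row
  refine eq_zero_of_sum_eq_zero_of_sum_mul_eq_zero (hfin.mem_toFinset.mpr hγ_add)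
    (v := t ^ (2 * content (b.1 + 1, 0))) ?_ ?_
    ((finsum_mem_eq_finite_toFinset_sum _ hfin).symm.trans (h0 μ hμ))
    ((finsum_mem_eq_finite_toFinset_sum _ hfin).symm.trans (h1 μ hμ))
  · rw [kappa_of_cells_eq_insert hb hγμ, add_sub_cancel_left]
    refine t_zpow_injective.ne ?_
    simp only [content]
    omega
  · intro g hg hgγ
    obtain ⟨c, hc, hgμ⟩ := addBox_iff.mp (hfin.mem_toFinset.mp hg)
    by_cases hcb : content c ≤ content b
    · obtain rfl | rfl := eq_or_eq_of_content_le hγμ hlast hc hgμ hcb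
      · exact absurd (YoungDiagram.ext (hgμ.trans hγμ.symm)) hgγ
      · left
        rw [kappa_of_cells_eq_insert hc hgμ, add_sub_cancel_left]
    · right
      refine ih g (by have := (hfin.mem_toFinset.mp hg).2; omega) ?_
      rw [kappa_of_cells_eq_insert hc hgμ, kappa_of_cells_eq_insert hb hγμ]
      omega

theorem finsum_cond_sub {α M : Type*} [AddCommGroup M] {P : α → Prop} (hP : {a | P a}.Finite)
    (f g : α → M) :
    ∑ᶠ (a : α) (_ : P a), (f a - g a) = (∑ᶠ (a : α) (_ : P a), f a) - ∑ᶠ (a : α) (_ : P a), g a :=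
  finsum_mem_sub_distrib f g hP

theorem EqR31.sub {T T' : YoungDiagram → YoungDiagram → YoungDiagram → K}
    (hT : EqR31 T) (hT' : EqR31 T') : EqR31 (T - T') := fun l1 l2 l3 => by
  simp only [Pi.sub_apply, mul_sub]
  rw [finsum_cond_sub (finite_setOf_addBox_left l1),
    finsum_cond_sub (finite_setOf_addBox_right l3)]
  linear_combination hT l1 l2 l3 - hT' l1 l2 l3

theorem EqR32.sub {T T' : YoungDiagram → YoungDiagram → YoungDiagram → K}
    (hT : EqR32 T) (hT' : EqR32 T') : EqR32 (T - T') := fun l1 l2 l3 => by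
  simp only [Pi.sub_apply, mul_sub]
  rw [finsum_cond_sub (finite_setOf_addBox_left l2),
    finsum_cond_sub (finite_setOf_addBox_right l3)]
  linear_combination hT l1 l2 l3 - hT' l1 l2 l3

theorem SatisfiesSystem.sub {T T' : YoungDiagram → YoungDiagram → YoungDiagram → K}
    (hT : SatisfiesSystem T) (hT' : SatisfiesSystem T') : SatisfiesSystem (T - T') :=
  ⟨hT.1.sub hT'.1, hT.2.1.sub hT'.2.1, hT.2.2.1.sub hT'.2.2.1, hT.2.2.2.1.sub hT'.2.2.2.1,
    hT.2.2.2.2.1.sub hT'.2.2.2.2.1, hT.2.2.2.2.2.sub hT'.2.2.2.2.2⟩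

theorem eq_zero_of_eqR31_of_eqR32 {D : YoungDiagram → YoungDiagram → YoungDiagram → K}
    (h31 : EqR31 D) (h32 : EqR32 D) {N : ℕ}
    (hN : ∀ l1 l2 l3 : YoungDiagram, l1.card + l2.card + l3.card ≤ N → D l1 l2 l3 = 0)
    (l1 l2 l3 : YoungDiagram) (hsize : l1.card + l2.card + l3.card = N + 1) (h3 : l3.card ≠ 0) :
    D l1 l2 l3 = 0 := by
  obtain ⟨n, hn⟩ := Nat.exists_eq_succ_of_ne_zero h3
  refine eq_zero_of_sum_addBox_eq_zero (f := D l1 l2) (fun μ hμ => ?_) (fun μ hμ => ?_) l3 hn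
  · have hsmaller :
        ∑ᶠ (b : YoungDiagram) (_ : AddBox b l2), t ^ (kappa b - kappa l2) * D l1 b μ = 0 :=
      finsum_mem_eq_zero_of_forall_eq_zero (s := {b | AddBox b l2}) fun b hb => by
        rw [hN _ _ _ (by have := hb.2; omega), mul_zero]
    have h := h32 l1 l2 μ
    rw [hN _ _ _ (by omega), hsmaller] at h
    linear_combination h
  · have hsmaller : ∑ᶠ (a : YoungDiagram) (_ : AddBox a l1), D a l2 μ = 0 :=
      finsum_mem_eq_zero_of_forall_eq_zero (s := {a | AddBox a l1}) fun a ha =>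
        hN _ _ _ (by have := ha.2; omega)
    have h := h31 l1 l2 μ
    rw [hN _ _ _ (by omega), hsmaller] at h
    linear_combination h

theorem eq_zero_of_satisfiesSystem {D : YoungDiagram → YoungDiagram → YoungDiagram → K}
    (hD : SatisfiesSystem D) (h0 : D ⊥ ⊥ ⊥ = 0) : D = 0 := by
  obtain ⟨h31, h32, h31₁, h32₁, h31₂, h32₂⟩ := hD
  suffices ∀ N l1 l2 l3, l1.card + l2.card + l3.card ≤ N → D l1 l2 l3 = 0 from
    funext₃ fun l1 l2 l3 => this _ l1 l2 l3 le_rfl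
  intro N
  induction N with
  | zero =>
    intro l1 l2 l3 h
    have eq_bot : ∀ γ : YoungDiagram, γ.card = 0 → γ = ⊥ := fun γ hγ =>
      YoungDiagram.ext (Finset.card_eq_zero.mp hγ)
    rwa [eq_bot l1 (by omega), eq_bot l2 (by omega), eq_bot l3 (by omega)]
  | succ N ih =>
    intro l1 l2 l3 h
    rcases Nat.lt_or_eq_of_le h with hlt | hsize
    · exact ih l1 l2 l3 (by omega)
    by_cases h3 : l3.card = 0
    · by_cases h2 : l2.card = 0
      · exact eq_zero_of_eqR31_of_eqR32 (N := N) h31₁ h32₁ (fun a b c _ => ih c a b (by omega))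
          l2 l3 l1 (by omega) (by omega)
      · exact eq_zero_of_eqR31_of_eqR32 (N := N) h31₂ h32₂ (fun a b c _ => ih b c a (by omega))
          l3 l1 l2 (by omega) h2
    · exact eq_zero_of_eqR31_of_eqR32 h31 h32 ih l1 l2 l3 hsize h3

/-- The system of the six equations `(R^j_i)` has at most one solution with
`T_{∅,∅,∅} = 1`: any two solutions coincide. -/
theorem vertex_recursion_uniqueness
    (T T' : YoungDiagram → YoungDiagram → YoungDiagram → K)
    (hT : SatisfiesSystem T) (hT' : SatisfiesSystem T')
    (h1 : T ⊥ ⊥ ⊥ = 1) (h1' : T' ⊥ ⊥ ⊥ = 1) : T = T' :=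
  sub_eq_zero.mp <| eq_zero_of_satisfiesSystem (hT.sub hT') (by simp [h1, h1'])

end
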